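/- Let K be an algebraically closed field, f, g ∈ K[[x_1,...,x_n]] with ord(f) = s ≥ 2 and τ(f) < ∞. If the k-th Tjurina algebras T_k(f) and T_k(g) are isomorphic as K-algebras for some k with m^{⌊(k+2s)/2⌋} ⊆ m⟨f⟩ + m^2 j(f), then f and g are contact equivalent. (Assuming the BGM finite determinacy theorem and the lifting lemma for isomorphisms of quotients of power series rings.) -/

import Mathlib

/-!
Lift the isomorphism `T_k(f) ≅ T_k(g)` to an automorphism `θ` of `K[[x]]` carrying
`⟨f⟩ + m^k j(f)` onto `⟨g⟩ + m^k j(g)`. As `j(f) ⊆ m^(s-1)`, this writes `g = a θ(f) + z` with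
`z ∈ m^(k+s-1)`, and `a` is a unit because otherwise `ord g > s`, which would force
`ord θ(f) > s`. So `θ⁻¹(a⁻¹ g) ≡ f` modulo `m^(k+s-1)`, and BGM applied with `l = ⌊k/2⌋ + s - 2`
makes `f` contact `(k+s-2)`-determined. The case `k ≤ 1` cannot occur: then
`m^s ⊆ m⟨f⟩ + m^2 j(f) ⊆ m^(s+1)`, contradicting `ord f = s`.
-/

noncomputable section

/-- The formal power series ring `K[[x_1,...,x_n]]`. -/
abbrev PS (K : Type*) [Field K] (n : ℕ) := MvPowerSeries (Fin n) K

/-- The maximal ideal `m` of `K[[x]]` (power series with zero constant term). -/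
def mx (K : Type*) [Field K] (n : ℕ) : Ideal (PS K n) :=
  RingHom.ker (MvPowerSeries.constantCoeff : PS K n →+* K)

/-- The `i`-th formal partial derivative of a power series. -/
def pd {K : Type*} [Field K] {n : ℕ} (i : Fin n) (f : PS K n) : PS K n :=
  fun e => (e i + 1 : ℕ) • MvPowerSeries.coeff (e + Finsupp.single i 1) f

/-- The Jacobian ideal `j(f) = ⟨∂f/∂x_1, ..., ∂f/∂x_n⟩`. -/
def jId {K : Type*} [Field K] {n : ℕ} (f : PS K n) : Ideal (PS K n) :=
  Ideal.span (Set.range fun i => pd i f)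

/-- The Tjurina ideal `tj(f) = ⟨f⟩ + j(f)`. -/
def tjId {K : Type*} [Field K] {n : ℕ} (f : PS K n) : Ideal (PS K n) :=
  Ideal.span {f} ⊔ jId f

/-- The ideal defining the `k`-th Tjurina algebra: `⟨f, m^k j(f)⟩`. -/
def TkId {K : Type*} [Field K] {n : ℕ} (k : ℕ) (f : PS K n) : Ideal (PS K n) :=
  Ideal.span {f} ⊔ (mx K n) ^ k * jId f

/-- The ideal defining the `k`-th Milnor algebra: `m^k j(f)`. -/
def MkId {K : Type*} [Field K] {n : ℕ} (k : ℕ) (f : PS K n) : Ideal (PS K n) :=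
  (mx K n) ^ k * jId f

/-- Contact equivalence: `g = u · φ(f)`. -/
def ContactEquiv {K : Type*} [Field K] {n : ℕ} (f g : PS K n) : Prop :=
  ∃ (φ : PS K n ≃ₐ[K] PS K n) (u : (PS K n)ˣ), g = (u : PS K n) * φ f

/-- Right equivalence: `g = φ(f)`. -/
def RightEquiv {K : Type*} [Field K] {n : ℕ} (f g : PS K n) : Prop :=
  ∃ φ : PS K n ≃ₐ[K] PS K n, g = φ f

/-- `f` is contact `N`-determined. -/
def ContactDetermined {K : Type*} [Field K] {n : ℕ} (N : ℕ) (f : PS K n) : Prop :=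
  ∀ g : PS K n, g - f ∈ (mx K n) ^ (N + 1) → ContactEquiv f g

/-- `f` is right `N`-determined. -/
def RightDetermined {K : Type*} [Field K] {n : ℕ} (N : ℕ) (f : PS K n) : Prop :=
  ∀ g : PS K n, g - f ∈ (mx K n) ^ (N + 1) → RightEquiv f g

open MvPowerSeries

theorem Derivation.apply_mem_pow_sub_one {R A : Type*} [CommSemiring R] [CommRing A]
    [Algebra R A] (D : Derivation R A A) {I : Ideal A} {t : ℕ} {x : A} (hx : x ∈ I ^ t) :
    D x ∈ I ^ (t - 1) := by
  induction t generalizing x with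
  | zero => simp
  | succ t ih =>
    rw [pow_succ'] at hx
    rw [Nat.add_sub_cancel]
    refine Submodule.mul_induction_on hx (fun a ha b hb => ?_) (fun x y hx hy => ?_)
    · rw [D.leibniz, smul_eq_mul, smul_eq_mul]
      refine add_mem (Ideal.pow_le_pow_right (n := t - 1 + 1) (by omega) ?_)
        (Ideal.mul_mem_right _ _ hb)
      rw [pow_succ']
      exact Ideal.mul_mem_mul ha (ih hb)
    · rw [map_add]
      exact add_mem hx hy

section PowerSeries

variable {K : Type*} [Field K] {n : ℕ}

theorem pd_eq_pderiv (i : Fin n) (f : PS K n) : pd i f = pderiv K i f := by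
  ext e
  rw [coeff_pderiv, mul_comm]
  exact nsmul_eq_mul _ _ |>.trans (by push_cast; rfl)

theorem jId_le_pow {t : ℕ} {f : PS K n} (hf : f ∈ mx K n ^ t) : jId f ≤ mx K n ^ (t - 1) := by
  rw [jId, Ideal.span_le]
  rintro _ ⟨i, rfl⟩
  show pd i f ∈ _
  exact pd_eq_pderiv i f ▸ (pderiv K i).apply_mem_pow_sub_one hf

theorem mx_eq_maximalIdeal : mx K n = IsLocalRing.maximalIdeal (PS K n) :=
  IsLocalRing.eq_maximalIdeal <|
    RingHom.ker_isMaximal_of_surjective _ fun c => ⟨C c, constantCoeff_C c⟩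

theorem le_mx_iff_ne_top {I : Ideal (PS K n)} : I ≤ mx K n ↔ I ≠ ⊤ := by
  rw [mx_eq_maximalIdeal]
  exact ⟨fun h hI => IsLocalRing.maximalIdeal.isMaximal _ |>.ne_top (top_le_iff.1 (hI ▸ h)),
    IsLocalRing.le_maximalIdeal⟩

theorem le_mx_of_quotient_equiv {I J : Ideal (PS K n)} (hI : I ≤ mx K n)
    (e : PS K n ⧸ I ≃ PS K n ⧸ J) : J ≤ mx K n := by
  rw [le_mx_iff_ne_top] at hI ⊢
  rwa [Ne, ← Ideal.Quotient.subsingleton_iff, ← e.subsingleton_congr,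
    Ideal.Quotient.subsingleton_iff]

theorem map_mx_pow (θ : PS K n ≃ₐ[K] PS K n) (t : ℕ) : Ideal.map θ (mx K n ^ t) = mx K n ^ t := by
  rw [Ideal.map_pow, mx_eq_maximalIdeal]
  exact congrArg (· ^ t) (IsLocalRing.map_ringEquiv_maximalIdeal (θ : PS K n ≃+* PS K n))

theorem AlgEquiv.apply_mem_mx_pow_iff (θ : PS K n ≃ₐ[K] PS K n) {t : ℕ} {x : PS K n} :
    θ x ∈ mx K n ^ t ↔ x ∈ mx K n ^ t := by
  refine ⟨fun h => ?_, fun h => (map_mx_pow θ t).le (Ideal.mem_map_of_mem θ h)⟩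
  simpa using (map_mx_pow θ.symm t).le (Ideal.mem_map_of_mem θ.symm h)

theorem mul_span_add_sq_mul_jId_le {s : ℕ} {f : PS K n} (hf : f ∈ mx K n ^ s) :
    mx K n * Ideal.span {f} + mx K n ^ 2 * jId f ≤ mx K n ^ (s + 1) := by
  refine sup_le ?_ ?_
  · rw [pow_succ']
    exact Ideal.mul_mono_right ((Ideal.span_singleton_le_iff_mem _).2 hf)
  · calc mx K n ^ 2 * jId f ≤ mx K n ^ 2 * mx K n ^ (s - 1) :=
          Ideal.mul_mono_right (jId_le_pow hf)
      _ ≤ mx K n ^ (s + 1) := by rw [← pow_add]; exact Ideal.pow_le_pow_right (by omega)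

theorem TkId_le_mx {k s : ℕ} (hs : 2 ≤ s) {f : PS K n} (hf : f ∈ mx K n ^ s) :
    TkId k f ≤ mx K n := by
  have hm : mx K n ^ s ≤ mx K n := Ideal.pow_le_self (by omega)
  refine sup_le ((Ideal.span_singleton_le_iff_mem _).2 (hm hf)) (Ideal.mul_le_right.trans ?_)
  exact (jId_le_pow hf).trans (Ideal.pow_le_self (by omega))

theorem TkId_le_pow_succ {k s : ℕ} (hk : 1 ≤ k) {g : PS K n} (hg : g ∈ mx K n ^ (s + 1)) :
    TkId k g ≤ mx K n ^ (s + 1) := by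
  refine sup_le ((Ideal.span_singleton_le_iff_mem _).2 hg) ?_
  calc mx K n ^ k * jId g ≤ mx K n ^ k * mx K n ^ s := Ideal.mul_mono_right (jId_le_pow hg)
    _ ≤ mx K n ^ (s + 1) := by rw [← pow_add]; exact Ideal.pow_le_pow_right (by omega)

theorem map_TkId (θ : PS K n ≃ₐ[K] PS K n) (k : ℕ) (f : PS K n) :
    Ideal.map θ (TkId k f) = Ideal.span {θ f} ⊔ mx K n ^ k * Ideal.map θ (jId f) := by
  rw [TkId, Ideal.map_sup, Ideal.map_mul, map_mx_pow, Ideal.map_span, Set.image_singleton]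

variable {k s : ℕ} {f g : PS K n}

theorem notMem_pow_succ_of_map_TkId {θ : PS K n ≃ₐ[K] PS K n} (hk : 1 ≤ k)
    (hf : f ∉ mx K n ^ (s + 1)) (hθ : Ideal.map θ (TkId k f) = TkId k g) :
    g ∉ mx K n ^ (s + 1) := by
  intro hg
  apply hf
  rw [← θ.apply_mem_mx_pow_iff]
  refine TkId_le_pow_succ hk hg (hθ ▸ Ideal.mem_map_of_mem θ ?_)
  exact Ideal.mem_sup_left (Ideal.mem_span_singleton_self f)

theorem exists_isUnit_sub_mul_mem_of_map_TkId {θ : PS K n ≃ₐ[K] PS K n} (hk : 2 ≤ k)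
    (hf : f ∈ mx K n ^ s) (hf' : f ∉ mx K n ^ (s + 1)) (hθ : Ideal.map θ (TkId k f) = TkId k g) :
    ∃ a, IsUnit a ∧ g - a * θ f ∈ mx K n ^ (k + (s - 1)) := by
  have hg : g ∈ Ideal.map θ (TkId k f) :=
    hθ ▸ Ideal.mem_sup_left (Ideal.mem_span_singleton_self g)
  rw [map_TkId] at hg
  obtain ⟨_, hy, z, hz, rfl⟩ := Submodule.mem_sup.1 hg
  obtain ⟨a, rfl⟩ := Ideal.mem_span_singleton'.1 hy
  have hz : z ∈ mx K n ^ (k + (s - 1)) := by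
    rw [pow_add]
    refine Ideal.mul_mono_right ?_ hz
    exact (Ideal.map_mono (jId_le_pow hf)).trans (map_mx_pow θ _).le
  refine ⟨a, ?_, by simpa using hz⟩
  rw [← IsLocalRing.notMem_maximalIdeal, ← mx_eq_maximalIdeal]
  intro ha
  refine notMem_pow_succ_of_map_TkId (by omega) hf' hθ
    (add_mem ?_ (Ideal.pow_le_pow_right (by omega) hz))
  rw [pow_succ']
  exact Ideal.mul_mem_mul ha (θ.apply_mem_mx_pow_iff.2 hf)

theorem ContactDetermined.contactEquiv_of_sub_mul_mem {N : ℕ} (hdet : ContactDetermined N f)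
    (θ : PS K n ≃ₐ[K] PS K n) {a : PS K n} (ha : IsUnit a) (h : g - a * θ f ∈ mx K n ^ (N + 1)) :
    ContactEquiv f g := by
  obtain ⟨u, rfl⟩ := ha
  set g' := θ.symm (↑u⁻¹ * g)
  have hg' : g' - f = θ.symm (↑u⁻¹ * (g - u * θ f)) := by
    rw [mul_sub, ← mul_assoc, Units.inv_mul, one_mul, map_sub, θ.symm_apply_apply]
  obtain ⟨φ, v, hv⟩ := hdet g' (hg' ▸ θ.symm.apply_mem_mx_pow_iff.2 (Ideal.mul_mem_left _ _ h))
  refine ⟨φ.trans θ, u * Units.map (θ : PS K n →* PS K n) v, ?_⟩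
  calc g = u * θ g' := by simp [g']
    _ = _ := by rw [hv, map_mul]; simp [mul_assoc]

end PowerSeries

theorem stmt_8_general {K : Type*} [Field K] {n : ℕ} (f g : PS K n)
    (s k : ℕ) (hs : 2 ≤ s)
    (hf : f ∈ (mx K n) ^ s) (hf' : f ∉ (mx K n) ^ (s + 1))
    (hlift : ∀ I J : Ideal (PS K n), I ≤ mx K n → J ≤ mx K n →
      ∀ e : (PS K n ⧸ I) ≃ₐ[K] (PS K n ⧸ J),
        ∃ θ : PS K n ≃ₐ[K] PS K n, Ideal.map θ I = J ∧
          ∀ h : PS K n, Ideal.Quotient.mk J (θ h) = e (Ideal.Quotient.mk I h))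
    (hBGM : ∀ l : ℕ, (mx K n) ^ (l + 2) ≤ mx K n * Ideal.span {f} + (mx K n) ^ 2 * jId f →
      ContactDetermined (2 * l - s + 2) f)
    (hsub : (mx K n) ^ ((k + 2 * s) / 2) ≤ mx K n * Ideal.span {f} + (mx K n) ^ 2 * jId f)
    (hiso : Nonempty ((PS K n ⧸ TkId k f) ≃ₐ[K] (PS K n ⧸ TkId k g))) :
    ContactEquiv f g := by
  obtain ⟨e⟩ := hiso
  have hk : 2 ≤ k := by
    by_contra! hk
    have hs' : (k + 2 * s) / 2 = s := by omega
    exact hf' (mul_span_add_sq_mul_jId_le hf (hsub (by rwa [hs'])))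
  have hIf := TkId_le_mx (k := k) hs hf
  obtain ⟨θ, hθ, -⟩ := hlift _ _ hIf (le_mx_of_quotient_equiv hIf e.toEquiv) e
  obtain ⟨a, ha, hga⟩ := exists_isUnit_sub_mul_mem_of_map_TkId hk hf hf' hθ
  have hdet := hBGM (k / 2 + s - 2) (by rwa [show k / 2 + s - 2 + 2 = (k + 2 * s) / 2 by omega])
  exact hdet.contactEquiv_of_sub_mul_mem θ ha (Ideal.pow_le_pow_right (by omega) hga)

/-- if `T_k(f) ≅ T_k(g)` as `K`-algebras for some `k` with
`m^{⌊(k+2s)/2⌋} ⊆ m⟨f⟩ + m^2 j(f)`, then `f` and `g` are contact equivalent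
(assuming the lifting lemma and the BGM determinacy theorem). -/
theorem stmt_8 {K : Type*} [Field K] [IsAlgClosed K] {n : ℕ} (f g : PS K n)
    (s k : ℕ) (hs : 2 ≤ s)
    (hf : f ∈ (mx K n) ^ s) (hf' : f ∉ (mx K n) ^ (s + 1))
    (htau : FiniteDimensional K (PS K n ⧸ tjId f))
    (hlift : ∀ I J : Ideal (PS K n), I ≤ mx K n → J ≤ mx K n →
      ∀ e : (PS K n ⧸ I) ≃ₐ[K] (PS K n ⧸ J),
        ∃ θ : PS K n ≃ₐ[K] PS K n, Ideal.map θ I = J ∧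
          ∀ h : PS K n, Ideal.Quotient.mk J (θ h) = e (Ideal.Quotient.mk I h))
    (hBGM : ∀ l : ℕ, (mx K n) ^ (l + 2) ≤ mx K n * Ideal.span {f} + (mx K n) ^ 2 * jId f →
      ContactDetermined (2 * l - s + 2) f)
    (hsub : (mx K n) ^ ((k + 2 * s) / 2) ≤ mx K n * Ideal.span {f} + (mx K n) ^ 2 * jId f)
    (hiso : Nonempty ((PS K n ⧸ TkId k f) ≃ₐ[K] (PS K n ⧸ TkId k g))) :
    ContactEquiv f g :=
  stmt_8_general f g s k hs hf hf' hlift hBGM hsub hiso
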